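/- Let (X,d,α) be a computable metric space, let S be a semi-computable compact set in (X,d,α), and let J be a rational open set (the set denoted by some rational open set code). Then S ∖ J is a semi-computable compact set in (X,d,α). -/

import Mathlib

open Metric Set

namespace CMS

/-- A function `f : α → ℝ` (on a `Primcodable` type of codes) is computable if some
computable `F : α → ℕ → ℚ` approximates it with precision `2 ^ (-i)`. -/
def ComputableReal {α : Type*} [Primcodable α] (f : α → ℝ) : Prop :=
  ∃ F : α → ℕ → ℚ, Computable₂ F ∧ ∀ x i, |f x - (F x i : ℝ)| < (2 : ℝ) ^ (-(i : ℤ))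

/-- `(X, d, α)` is a computable metric space: `α` has dense range and
`(i,j) ↦ d (α i) (α j)` is computable. -/
structure IsComputableMetric {X : Type*} [MetricSpace X] (α : ℕ → X) : Prop where
  dense : DenseRange α
  dist_computable : ComputableReal (fun p : ℕ × ℕ => dist (α p.1) (α p.2))

variable {X : Type*} [MetricSpace X]

/-- The open ball denoted by the rational ball code `c = (i, q)`. -/
def ratBall (α : ℕ → X) (c : ℕ × ℚ) : Set X := Metric.ball (α c.1) (c.2 : ℝ)

/-- The rational open set denoted by a rational open set code (a list of ball codes). -/
def ratOpen (α : ℕ → X) (L : List (ℕ × ℚ)) : Set X := ⋃ c ∈ L, ratBall α c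

/-- A valid rational open set code: a nonempty list of ball codes with positive radii. -/
def ValidCode (L : List (ℕ × ℚ)) : Prop := L ≠ [] ∧ ∀ c ∈ L, 0 < c.2

/-- `K` is a semi-computable compact set: `K` is compact and the set of rational
open set codes whose denoted set contains `K` is c.e. -/
def SemiComputableCompact (α : ℕ → X) (K : Set X) : Prop :=
  IsCompact K ∧ REPred (fun L : List (ℕ × ℚ) => ValidCode L ∧ K ⊆ ratOpen α L)

/-- `S` is a c.e. closed set: `S` is closed and the set of rational ball codes whose
denoted ball meets `S` is c.e. -/
def CeClosed (α : ℕ → X) (S : Set X) : Prop :=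
  IsClosed S ∧ REPred (fun c : ℕ × ℚ => 0 < c.2 ∧ (ratBall α c ∩ S).Nonempty)

/-- `S` is a co-c.e. closed set: `S` is closed and there is a computable sequence of
rational ball codes whose denoted balls have union `X \ S`. -/
def CoCeClosed (α : ℕ → X) (S : Set X) : Prop :=
  IsClosed S ∧ ∃ f : ℕ → ℕ × ℚ, Computable f ∧ (∀ k, 0 < (f k).2) ∧
    Sᶜ = ⋃ k, ratBall α (f k)

/-- A computable compact set: semi-computable compact and c.e. closed. -/
def ComputableCompact (α : ℕ → X) (K : Set X) : Prop :=
  SemiComputableCompact α K ∧ CeClosed α K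

/-- A computable closed set: c.e. closed and co-c.e. closed. -/
def ComputableClosed (α : ℕ → X) (S : Set X) : Prop :=
  CeClosed α S ∧ CoCeClosed α S

/-- `(X, d, α)` is locally computable: each compact set is contained in a computable
compact set. -/
def LocallyComputable (α : ℕ → X) : Prop :=
  ∀ A : Set X, IsCompact A → ∃ K : Set X, ComputableCompact α K ∧ A ⊆ K

/-- The half-space `ℍⁿ = {x ∈ ℝⁿ | xₙ ≥ 0}` (the condition is on the last coordinate). -/
def halfSpace (n : ℕ) : Set (Fin n → ℝ) :=
  {x | ∀ i : Fin n, (i : ℕ) = n - 1 → 0 ≤ x i}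

/-- `Bd ℍⁿ = {x ∈ ℍⁿ | xₙ = 0}`. -/
def bdHalfSpace (n : ℕ) : Set (Fin n → ℝ) :=
  {x | ∀ i : Fin n, (i : ℕ) = n - 1 → x i = 0}

/-- `U` is an open subset of the half-space `ℍⁿ` (in the subspace topology). -/
def IsOpenInHalfSpace (n : ℕ) (U : Set (Fin n → ℝ)) : Prop :=
  U ⊆ halfSpace n ∧ ∃ V : Set (Fin n → ℝ), IsOpen V ∧ U = V ∩ halfSpace n

/-- `M` is an `n`-manifold with boundary: `M` is nonempty and every point has a
neighborhood homeomorphic to an open subset of `ℍⁿ`. -/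
def IsManifoldWithBoundaryOfDim (n : ℕ) (M : Type*) [TopologicalSpace M] : Prop :=
  Nonempty M ∧ ∀ x : M, ∃ N : Set M, N ∈ nhds x ∧
    ∃ U : Set (Fin n → ℝ), IsOpenInHalfSpace n U ∧ Nonempty (↥N ≃ₜ ↥U)

/-- The boundary `∂M` of an `n`-manifold with boundary: points having a neighborhood
homeomorphic to an open subset of `ℍⁿ` by a homeomorphism sending the point into `Bd ℍⁿ`. -/
def manifoldBoundary (n : ℕ) (M : Type*) [TopologicalSpace M] : Set M :=
  {x | ∃ N : Set M, N ∈ nhds x ∧ ∃ U : Set (Fin n → ℝ), IsOpenInHalfSpace n U ∧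
    ∃ (h : ↥N ≃ₜ ↥U) (hx : x ∈ N), ((h ⟨x, hx⟩ : ↥U) : Fin n → ℝ) ∈ bdHalfSpace n}

/-- `M` is an `n`-manifold (without boundary): `M` is nonempty and every point has a
neighborhood homeomorphic to `ℝⁿ`. -/
def IsManifoldOfDim (n : ℕ) (M : Type*) [TopologicalSpace M] : Prop :=
  Nonempty M ∧ ∀ x : M, ∃ N : Set M, N ∈ nhds x ∧ Nonempty (↥N ≃ₜ (Fin n → ℝ))

/-- `A ≺_ε B` : every point of `A` is within distance `< ε` of some point of `B`. -/
def Prec (ε : ℝ) (A B : Set X) : Prop := ∀ a ∈ A, ∃ b ∈ B, dist a b < ε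

/-- The finite set of rational points denoted by a finite-point code (a list of naturals). -/
def finPts (α : ℕ → X) (L : List ℕ) : Set X := {x | ∃ l ∈ L, α l = x}

/-- `A` is computable up to `B`: a computable function produces, for each `k`, a
finite-point code with denoted set `Λ_k` such that `A ≺_{2^{-k}} Λ_k` and `Λ_k ≺_{2^{-k}} B`. -/
def ComputableUpTo (α : ℕ → X) (A B : Set X) : Prop :=
  ∃ f : ℕ → List ℕ, Computable f ∧ ∀ k : ℕ, f k ≠ [] ∧
    Prec ((2 : ℝ) ^ (-(k : ℤ))) A (finPts α (f k)) ∧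
    Prec ((2 : ℝ) ^ (-(k : ℤ))) (finPts α (f k)) B

end CMS

/-! Since `S \ J ⊆ U` iff `S ⊆ U ∪ J`, a code `L'` covers `S \ J` exactly when the code
`L' ++ L` covers `S`, where `L` is the code of `J`. So the covering codes of `S \ J` are
enumerated by running the enumeration for `S` on `L' ++ L`. -/

theorem REPred.comp {α β : Type*} [Primcodable α] [Primcodable β] {p : β → Prop}
    (hp : REPred p) {f : α → β} (hf : Computable f) : REPred fun a => p (f a) :=
  Partrec.comp hp hf

theorem REPred.and {α : Type*} [Primcodable α] {p q : α → Prop} (hp : REPred p)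
    (hq : REPred q) : REPred fun a => p a ∧ q a := by
  refine (Partrec.dom_re (hp.bind (hq.comp Computable.fst).to₂)).of_eq fun a => ?_
  simp only [Part.bind_dom, Part.assert, Part.some_dom, exists_prop, and_true]

theorem REPred.list_ne_nil {α : Type*} [Primcodable α] : REPred fun l : List α => l ≠ [] :=
  ComputablePred.to_re (PrimrecPred.computablePred
    (Primrec.eq.comp Primrec.id (Primrec.const [])).not)

namespace CMS

variable {X : Type*} [MetricSpace X]

theorem isOpen_ratOpen (α : ℕ → X) (L : List (ℕ × ℚ)) : IsOpen (ratOpen α L) :=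
  isOpen_biUnion fun _ _ => isOpen_ball

theorem ratOpen_append (α : ℕ → X) (L₁ L₂ : List (ℕ × ℚ)) :
    ratOpen α (L₁ ++ L₂) = ratOpen α L₁ ∪ ratOpen α L₂ := by
  ext x
  simp only [ratOpen, mem_iUnion, mem_union, List.mem_append, exists_prop, or_and_right,
    exists_or]

theorem validCode_append_iff {L : List (ℕ × ℚ)} (hL : ∀ c ∈ L, 0 < c.2)
    (L' : List (ℕ × ℚ)) : L' ≠ [] ∧ ValidCode (L' ++ L) ↔ ValidCode L' := by
  simp only [ValidCode, List.mem_append, or_imp, forall_and, and_iff_left hL]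
  exact ⟨fun ⟨hne, _, hpos⟩ => ⟨hne, hpos⟩,
    fun ⟨hne, hpos⟩ => ⟨hne, List.append_ne_nil_of_left_ne_nil hne L, hpos⟩⟩

theorem validCode_append_and_subset_iff (α : ℕ → X) (K : Set X) {L : List (ℕ × ℚ)}
    (hL : ∀ c ∈ L, 0 < c.2) (L' : List (ℕ × ℚ)) :
    (L' ≠ [] ∧ ValidCode (L' ++ L) ∧ K ⊆ ratOpen α (L' ++ L)) ↔
      ValidCode L' ∧ K \ ratOpen α L ⊆ ratOpen α L' := by
  rw [← and_assoc, validCode_append_iff hL, ratOpen_append, sdiff_subset_iff, union_comm]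

end CMS

open CMS in
theorem stmt_9_general {X : Type} [MetricSpace X] (α : ℕ → X)
    (S : Set X) (hS : SemiComputableCompact α S)
    (L : List (ℕ × ℚ)) (hL : ValidCode L) :
    SemiComputableCompact α (S \ ratOpen α L) := by
  have happend : Computable fun L' : List (ℕ × ℚ) => L' ++ L :=
    (Primrec.list_append.comp Primrec.id (Primrec.const L)).to_comp
  exact ⟨hS.1.diff (isOpen_ratOpen α L),
    (REPred.list_ne_nil.and (hS.2.comp happend)).of_eq
      (validCode_append_and_subset_iff α S hL.2)⟩

open CMS in
/-- If `S` is a semi-computable compact set and `J` is a rational open set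
(the set denoted by some rational open set code), then `S \ J` is a semi-computable
compact set. -/
theorem stmt_9 {X : Type} [MetricSpace X] (α : ℕ → X) (hα : IsComputableMetric α)
    (S : Set X) (hS : SemiComputableCompact α S)
    (L : List (ℕ × ℚ)) (hL : ValidCode L) :
    SemiComputableCompact α (S \ ratOpen α L) :=
  stmt_9_general α S hS L hL
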